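/- arXiv:1112.3423 — 3 statements merged into one kernel-verified Lean document; each statement's English description precedes it below -/
import Mathlib

section
/- Let V be a dissipative quadratic stochastic operator on S^{m-1} with coefficients p_{ij,k}, and suppose p_{jj,k₀} = 1 for some indices j, k₀. Then for every i ∈ {1,…,m} one has p_{ij,k₀} ≥ 1/2, and moreover p_{ij,k₀} = max_{1 ≤ t ≤ m} p_{ij,t}. -/
open Finset Filter Topology

/-- `Majorizes y x` means `x ≺ y`: for every `k`, the sum of the `k` largest components of
`x` is at most the sum of the `k` largest components of `y`.  This is expressed via the
standard equivalent form: every subset-sum of `x` is dominated by some subset-sum of `y`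
over a subset of the same cardinality (the maximum of the latter over subsets of
cardinality `k` being exactly the sum of the `k` largest components of `y`). -/
def Majorizes {m : ℕ} (y x : Fin m → ℝ) : Prop :=
  ∀ A : Finset (Fin m), ∃ B : Finset (Fin m),
    B.card = A.card ∧ ∑ i ∈ A, x i ≤ ∑ i ∈ B, y i

/-- The quadratic operator `(Vx)_k = ∑_{i,j} p_{ij,k} x_i x_j` with heredity
coefficients `p`. -/
def QSO {m : ℕ} (p : Fin m → Fin m → Fin m → ℝ) (x : Fin m → ℝ) : Fin m → ℝ :=
  fun k => ∑ i, ∑ j, p i j k * x i * x j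

/-- Conditions on heredity coefficients: symmetry, nonnegativity, stochasticity. -/
def IsQSOCoeff {m : ℕ} (p : Fin m → Fin m → Fin m → ℝ) : Prop :=
  (∀ i j k, p i j k = p j i k) ∧ (∀ i j k, 0 ≤ p i j k) ∧ (∀ i j, ∑ k, p i j k = 1)

/-- Dissipativity of the q.s.o.: `V x ≻ x` for every `x` in the simplex. -/
def IsDissipative {m : ℕ} (p : Fin m → Fin m → Fin m → ℝ) : Prop :=
  ∀ x ∈ stdSimplex ℝ (Fin m), Majorizes (QSO p x) x

/-- The `k`-th vertex of the simplex (the `k`-th standard basis vector). -/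
def vertex {m : ℕ} (k : Fin m) : Fin m → ℝ := fun j => if j = k then 1 else 0

/-- The ω-limit set of the trajectory of `x` under `V`: the set of all limit points of
the sequence `(Vⁿ x)ₙ`. -/
def omegaLimitSet {m : ℕ} (V : (Fin m → ℝ) → Fin m → ℝ) (x : Fin m → ℝ) :
    Set (Fin m → ℝ) :=
  {y | ∃ φ : ℕ → ℕ, StrictMono φ ∧ Tendsto (fun n => V^[φ n] x) atTop (𝓝 y)}

/-! Testing the dissipativity inequality `(Vx)_b ≥ x_j` on the mixture `x = l e_i + (1 - l) e_j`
with small `l > 0`: the vertex `e_j` is mapped to `e_{k₀}`, so for `b ≠ k₀` the value `(Vx)_b`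
is only `O(l)`, which forces `b = k₀`, and comparing the `O(l)` terms then gives
`1 - 2l ≤ 2 p_{ij,k₀}`. Letting `l → 0` yields `p_{ij,k₀} ≥ 1/2`; since the `p_{ij,t}` sum to `1`,
every other `p_{ij,t}` is at most `1/2`. -/

lemma vertex_eq_single {m : ℕ} (k : Fin m) : vertex k = Pi.single k 1 := by
  ext t
  simp [vertex, Pi.single_apply]

lemma smul_vertex_add_smul_vertex_mem_stdSimplex {m : ℕ} (i j : Fin m) {a b : ℝ}
    (ha : 0 ≤ a) (hb : 0 ≤ b) (hab : a + b = 1) :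
    a • vertex i + b • vertex j ∈ stdSimplex ℝ (Fin m) := by
  rw [vertex_eq_single, vertex_eq_single]
  exact convex_stdSimplex ℝ (Fin m) (single_mem_stdSimplex ℝ i) (single_mem_stdSimplex ℝ j)
    ha hb hab

lemma QSO_smul_vertex_add_smul_vertex {m : ℕ} (p : Fin m → Fin m → Fin m → ℝ)
    (i j k : Fin m) (a b : ℝ) (hsym : p j i k = p i j k) :
    QSO p (a • vertex i + b • vertex j) k
      = a ^ 2 * p i i k + 2 * a * b * p i j k + b ^ 2 * p j j k := by
  simp only [QSO, vertex, Pi.add_apply, Pi.smul_apply, smul_eq_mul, mul_ite, mul_one, mul_zero,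
    mul_add, add_mul, Finset.sum_add_distrib, Finset.sum_ite_eq', Finset.mem_univ, if_true,
    ite_mul, zero_mul]
  rw [hsym]
  ring

lemma Majorizes.exists_apply_le {m : ℕ} {x y : Fin m → ℝ} (h : Majorizes y x) (a : Fin m) :
    ∃ b, x a ≤ y b := by
  obtain ⟨B, hcard, hle⟩ := h {a}
  obtain ⟨b, rfl⟩ := Finset.card_eq_one.mp hcard
  exact ⟨b, by simpa using hle⟩

namespace IsQSOCoeff

variable {m : ℕ} {p : Fin m → Fin m → Fin m → ℝ}

lemma add_le_one (hp : IsQSOCoeff p) (a b : Fin m) {t k : Fin m} (ht : t ≠ k) :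
    p a b t + p a b k ≤ 1 := by
  rw [← Finset.sum_pair ht, ← hp.2.2 a b]
  exact Finset.sum_le_sum_of_subset_of_nonneg (Finset.subset_univ _)
    fun s _ _ => hp.2.1 a b s

lemma le_one (hp : IsQSOCoeff p) (a b k : Fin m) : p a b k ≤ 1 := by
  rw [← hp.2.2 a b]
  exact Finset.single_le_sum (fun t _ => hp.2.1 a b t) (Finset.mem_univ k)

lemma eq_zero_of_eq_one (hp : IsQSOCoeff p) {a b k t : Fin m} (h : p a b k = 1) (ht : t ≠ k) :
    p a b t = 0 :=
  le_antisymm (by linarith [hp.add_le_one a b ht]) (hp.2.1 a b t)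

end IsQSOCoeff

lemma IsDissipative.one_sub_two_mul_le {m : ℕ} {p : Fin m → Fin m → Fin m → ℝ}
    (hp : IsQSOCoeff p) (hd : IsDissipative p) {j k₀ : Fin m} (h : p j j k₀ = 1) (i : Fin m)
    {l : ℝ} (hl : 0 < l) (hl' : l ≤ 1 / 4) :
    1 - 2 * l ≤ 2 * p i j k₀ := by
  set x := l • vertex i + (1 - l) • vertex j
  have hVx : ∀ k, QSO p x k
      = l ^ 2 * p i i k + 2 * l * (1 - l) * p i j k + (1 - l) ^ 2 * p j j k :=
    fun k => QSO_smul_vertex_add_smul_vertex p i j k l (1 - l) (hp.1 j i k)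
  have hxj : 1 - l ≤ x j := by
    simp only [x, vertex, Pi.add_apply, Pi.smul_apply, smul_eq_mul]
    split_ifs <;> linarith
  obtain ⟨b, hb⟩ := (hd x (smul_vertex_add_smul_vertex_mem_stdSimplex i j hl.le
    (by linarith) (by ring))).exists_apply_le j
  have hl1 : 0 ≤ l * (1 - l) := mul_nonneg hl.le (by linarith)
  -- off `k₀` only the `O(l)` terms survive, and they are too small to dominate `x j`
  have hbk₀ : b = k₀ := by
    by_contra hne
    have hVxb := hVx b
    rw [hp.eq_zero_of_eq_one h hne] at hVxb
    nlinarith [hp.le_one i i b, hp.le_one i j b, hp.2.1 i i b, hp.2.1 i j b]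
  rw [hbk₀, hVx k₀, h] at hb
  have hscaled : l * (1 - 2 * l) ≤ l * (2 * (1 - l) * p i j k₀) := by
    nlinarith [hp.le_one i i k₀, hp.2.1 i j k₀]
  nlinarith [le_of_mul_le_mul_left hscaled hl, hp.2.1 i j k₀]

/-- if `p_{jj,k₀} = 1` then `p_{ij,k₀} ≥ 1/2` and `p_{ij,k₀}` is the
maximal component of `(p_{ij,1}, …, p_{ij,m})`, for every `i`. -/
theorem stmt1 {m : ℕ} (p : Fin m → Fin m → Fin m → ℝ)
    (hp : IsQSOCoeff p) (hd : IsDissipative p)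
    (j k₀ : Fin m) (h : p j j k₀ = 1) :
    ∀ i : Fin m, 1 / 2 ≤ p i j k₀ ∧ ∀ t : Fin m, p i j t ≤ p i j k₀ := by
  intro i
  have half : 1 / 2 ≤ p i j k₀ := by
    refine le_of_forall_pos_le_add fun ε hε => ?_
    have := hd.one_sub_two_mul_le hp h i (lt_min hε (by norm_num : (0 : ℝ) < 1 / 4))
      (min_le_right _ _)
    linarith [min_le_left ε (1 / 4)]
  refine ⟨half, fun t => ?_⟩
  rcases eq_or_ne t k₀ with rfl | ht
  · exact le_rfl
  · linarith [hp.add_le_one i j ht]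
end

section
/- Let V be a dissipative quadratic stochastic operator on S^{m-1} with coefficients p_{ij,k} such that p_{ii,1} = 1 for all i = 1,…,m. Then V is regular and its unique fixed point is the vertex e₁; that is, Fix(V) = {e₁} and for every x ∈ S^{m-1} the trajectory Vⁿx converges to e₁ as n → ∞. -/
open Finset Filter Topology

/-!
Testing dissipativity at the points `t e_i + (1 - t) e_j` of an edge of the simplex shows that
every coefficient `p_{ij,1}` is at least `1/2`. Since `∑ x_i x_j = 1`, this makes
`(Vx)_1 - 1/2 = ∑ (p_{ij,1} - 1/2) x_i x_j` a sum of nonnegative terms whose diagonal term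
alone is `x_1² / 2`, so `(Vx)_1 ≥ (1 + x_1²) / 2`. Along a trajectory the first coordinate
therefore increases to a limit `L` with `(1 + L²) / 2 ≤ L`, i.e. `L = 1`, and the trajectory
converges to `e₁`; a fixed point is its own limit, hence equal to `e₁`.
-/

section Simplex

variable {ι : Type*} [Fintype ι] {x : ι → ℝ}

lemma add_le_one_of_mem_stdSimplex (hx : x ∈ stdSimplex ℝ ι) {i j : ι} (hij : i ≠ j) :
    x i + x j ≤ 1 := by
  classical
  rw [← hx.2, ← sum_pair hij]
  exact sum_le_univ_sum_of_nonneg hx.1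

variable [DecidableEq ι]

lemma eq_single_of_mem_stdSimplex (hx : x ∈ stdSimplex ℝ ι) {i : ι} (hi : x i = 1) :
    x = Pi.single i 1 := by
  funext k
  rcases eq_or_ne k i with rfl | hk
  · simp [hi]
  · have := add_le_one_of_mem_stdSimplex hx hk
    simp only [Pi.single_apply, hk, if_false]
    linarith [hx.1 k]

lemma tendsto_single_of_tendsto_apply {y : ℕ → ι → ℝ} (hy : ∀ n, y n ∈ stdSimplex ℝ ι)
    {i : ι} (h : Tendsto (fun n => y n i) atTop (𝓝 1)) : Tendsto y atTop (𝓝 (Pi.single i 1)) := by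
  rw [tendsto_pi_nhds]
  intro k
  rcases eq_or_ne k i with rfl | hk
  · simpa using h
  · have hgap : Tendsto (fun n => 1 - y n i) atTop (𝓝 0) := by
      simpa using h.const_sub 1
    simpa [Pi.single_apply, hk] using squeeze_zero (fun n => (hy n).1 k)
      (fun n => by linarith [add_le_one_of_mem_stdSimplex (hy n) hk]) hgap

end Simplex

lemma tendsto_one_of_one_add_sq_div_two_le {a : ℕ → ℝ} (hle : ∀ n, a n ≤ 1)
    (hstep : ∀ n, (1 + a n ^ 2) / 2 ≤ a (n + 1)) : Tendsto a atTop (𝓝 1) := by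
  have hmono : Monotone a := monotone_nat_of_le_succ fun n => by
    nlinarith [hstep n, sq_nonneg (a n - 1)]
  have hlim := tendsto_atTop_ciSup hmono ⟨1, by rintro _ ⟨n, rfl⟩; exact hle n⟩
  set L := ⨆ n, a n
  have hL : (1 + L ^ 2) / 2 ≤ L :=
    le_of_tendsto_of_tendsto' (((hlim.pow 2).const_add 1).div_const 2)
      (hlim.comp (tendsto_add_atTop_nat 1)) hstep
  have : L = 1 := by nlinarith [sq_nonneg (L - 1)]
  rwa [this] at hlim

section QSO

variable {m : ℕ} {p : Fin m → Fin m → Fin m → ℝ} {x : Fin m → ℝ}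

lemma IsQSOCoeff.mem_stdSimplex (hp : IsQSOCoeff p) (i j : Fin m) :
    p i j ∈ stdSimplex ℝ (Fin m) :=
  ⟨hp.2.1 i j, hp.2.2 i j⟩

lemma qso_mem_stdSimplex (hp : IsQSOCoeff p) (hx : x ∈ stdSimplex ℝ (Fin m)) :
    QSO p x ∈ stdSimplex ℝ (Fin m) := by
  refine ⟨fun k => sum_nonneg fun i _ => sum_nonneg fun j _ =>
    mul_nonneg (mul_nonneg (hp.2.1 i j k) (hx.1 i)) (hx.1 j), ?_⟩
  calc ∑ k, QSO p x k = ∑ i, ∑ j, (∑ k, p i j k) * x i * x j := by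
        simp only [QSO, sum_mul]
        rw [sum_comm]
        exact sum_congr rfl fun i _ => sum_comm
    _ = (∑ i, x i) * ∑ j, x j := by simp [hp.2.2, sum_mul_sum]
    _ = 1 := by rw [hx.2, one_mul]

lemma qso_smul_single_add_smul_single (i j k : Fin m) (t s : ℝ) :
    QSO p (t • Pi.single i 1 + s • Pi.single j 1) k
      = p i i k * t ^ 2 + (p i j k + p j i k) * t * s + p j j k * s ^ 2 := by
  simp [QSO, Pi.single_apply, mul_add, add_mul, sum_add_distrib]
  ring

lemma qso_single (hp : IsQSOCoeff p) {o : Fin m} (ho : p o o o = 1) :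
    QSO p (Pi.single o 1) = Pi.single o 1 := by
  funext k
  simpa [QSO, Pi.single_apply] using
    congrFun (eq_single_of_mem_stdSimplex (hp.mem_stdSimplex o o) ho) k

variable {o : Fin m}

lemma IsDissipative.one_half_le_coeff (hp : IsQSOCoeff p) (hd : IsDissipative p)
    (ho : ∀ i, p i i o = 1) (i j : Fin m) : 1 / 2 ≤ p i j o := by
  by_contra! hc
  set c := p i j o
  have hc0 : 0 ≤ c := hp.2.1 i j o
  have hij : i ≠ j := by rintro rfl; linarith [ho i]
  set t : ℝ := (3 + 2 * c) / 4 with ht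
  have ht0 : 0 < t := by linarith
  have ht1 : 0 < 1 - t := by linarith
  have hx : t • Pi.single i 1 + (1 - t) • Pi.single j 1 ∈ stdSimplex ℝ (Fin m) :=
    convex_stdSimplex ℝ (Fin m) (single_mem_stdSimplex ℝ i)
      (single_mem_stdSimplex ℝ j) ht0.le ht1.le (by ring)
  obtain ⟨B, hB, hle⟩ := hd _ hx {i}
  obtain ⟨k, rfl⟩ := card_eq_one.mp hB
  simp only [sum_singleton, qso_smul_single_add_smul_single, hp.1 j i, Pi.add_apply,
    Pi.smul_apply, Pi.single_eq_same, Pi.single_eq_of_ne hij, smul_eq_mul, mul_one,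
    mul_zero, add_zero] at hle
  rcases eq_or_ne k o with rfl | hk
  · rw [ho i, ho j] at hle
    have hgap : 0 < (1 / 2 - c) * (1 + c) := mul_pos (by linarith) (by linarith)
    nlinarith [mul_pos ht1 hgap]
  · have hdiag : ∀ a, p a a k = 0 := fun a => by
      simpa [hk] using congrFun (eq_single_of_mem_stdSimplex (hp.mem_stdSimplex a a) (ho a)) k
    have := add_le_one_of_mem_stdSimplex (hp.mem_stdSimplex i j) hk
    rw [hdiag, hdiag] at hle
    have hgap : 0 < 1 - 2 * (1 - c) * (1 - t) := by nlinarith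
    nlinarith [mul_le_mul_of_nonneg_right this (mul_pos ht0 ht1).le, mul_pos ht0 hgap]

lemma IsDissipative.one_add_sq_div_two_le_qso (hp : IsQSOCoeff p) (hd : IsDissipative p)
    (ho : ∀ i, p i i o = 1) (hx : x ∈ stdSimplex ℝ (Fin m)) :
    (1 + x o ^ 2) / 2 ≤ QSO p x o := by
  have hnn : ∀ a b, 0 ≤ (p a b o - 1 / 2) * x a * x b := fun a b =>
    mul_nonneg (mul_nonneg (sub_nonneg.2 (hd.one_half_le_coeff hp ho a b)) (hx.1 a)) (hx.1 b)
  have hexcess : QSO p x o - 1 / 2 = ∑ a, ∑ b, (p a b o - 1 / 2) * x a * x b := by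
    have : ∑ a, ∑ b, 1 / 2 * x a * x b = (1 / 2 : ℝ) := by
      simp_rw [mul_assoc, ← mul_sum, ← sum_mul, hx.2]; norm_num
    simp only [QSO, sub_mul, sum_sub_distrib, this]
  have hdiag : (p o o o - 1 / 2) * x o * x o ≤ ∑ a, ∑ b, (p a b o - 1 / 2) * x a * x b :=
    (single_le_sum (fun b _ => hnn o b) (mem_univ o)).trans
      (single_le_sum (fun a _ => sum_nonneg fun b _ => hnn a b) (mem_univ o))
  rw [ho o] at hdiag
  nlinarith

lemma IsDissipative.tendsto_iterate_qso (hp : IsQSOCoeff p) (hd : IsDissipative p)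
    (ho : ∀ i, p i i o = 1) (hx : x ∈ stdSimplex ℝ (Fin m)) :
    Tendsto (fun n => (QSO p)^[n] x) atTop (𝓝 (vertex o)) := by
  have hmem : ∀ n, (QSO p)^[n] x ∈ stdSimplex ℝ (Fin m) := fun n =>
    Set.MapsTo.iterate (fun _ => qso_mem_stdSimplex hp) n hx
  rw [vertex_eq_single]
  refine tendsto_single_of_tendsto_apply hmem
    (tendsto_one_of_one_add_sq_div_two_le (fun n => (mem_Icc_of_mem_stdSimplex (hmem n) o).2)
      fun n => ?_)
  rw [Function.iterate_succ_apply']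
  exact hd.one_add_sq_div_two_le_qso hp ho (hmem n)

end QSO

/-- if `p_{ii,1} = 1` for all `i`, the dissipative q.s.o. is regular with
unique fixed point the vertex `e₁`. -/
theorem stmt3 {m : ℕ} (hm : 0 < m) (p : Fin m → Fin m → Fin m → ℝ)
    (hp : IsQSOCoeff p) (hd : IsDissipative p)
    (h1 : ∀ i : Fin m, p i i ⟨0, hm⟩ = 1) :
    {x ∈ stdSimplex ℝ (Fin m) | QSO p x = x} = {vertex ⟨0, hm⟩} ∧
    ∀ x ∈ stdSimplex ℝ (Fin m),
      Tendsto (fun n => (QSO p)^[n] x) atTop (𝓝 (vertex (⟨0, hm⟩ : Fin m))) := by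
  have hlim := fun x (hx : x ∈ stdSimplex ℝ (Fin m)) => hd.tendsto_iterate_qso hp h1 hx
  refine ⟨Set.Subset.antisymm ?_ ?_, hlim⟩
  · rintro x ⟨hx, hfix⟩
    have hconst : Tendsto (fun n => (QSO p)^[n] x) atTop (𝓝 x) := by
      simp only [Function.iterate_fixed hfix, tendsto_const_nhds]
    exact tendsto_nhds_unique hconst (hlim x hx)
  · rintro _ rfl
    rw [vertex_eq_single]
    exact ⟨single_mem_stdSimplex ℝ _, qso_single hp (h1 _)⟩
end

section
/- Let V be a dissipative quadratic stochastic operator on the two-dimensional simplex S² (i.e. m = 3). If V is regular, then its unique fixed point is one of the six points e₁, e₂, e₃, (e₁+e₂)/2, (e₁+e₃)/2, (e₂+e₃)/2. -/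
/-!
Dissipativity applied to a singleton shows that the largest coordinate never decreases along a
trajectory. Starting at a vertex, every iterate therefore has a coordinate `≥ 1`; this closed
condition passes to the limit, and the only points of the simplex with a coordinate `≥ 1` are
its vertices.
-/

open Finset Filter Topology

lemma vertex_mem_stdSimplex {m : ℕ} (k : Fin m) : vertex k ∈ stdSimplex ℝ (Fin m) := by
  rw [vertex_eq_single]
  exact single_mem_stdSimplex ℝ k

lemma QSO_mem_stdSimplex {m : ℕ} {p : Fin m → Fin m → Fin m → ℝ} (hp : IsQSOCoeff p)
    {x : Fin m → ℝ} (hx : x ∈ stdSimplex ℝ (Fin m)) : QSO p x ∈ stdSimplex ℝ (Fin m) := by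
  obtain ⟨-, hpos, hstoch⟩ := hp
  obtain ⟨hx0, hx1⟩ := hx
  refine ⟨fun k => ?_, ?_⟩
  · exact sum_nonneg fun i _ => sum_nonneg fun j _ =>
      mul_nonneg (mul_nonneg (hpos i j k) (hx0 i)) (hx0 j)
  · calc ∑ k, QSO p x k = ∑ i, ∑ j, (∑ k, p i j k) * (x i * x j) := by
          simp only [QSO, sum_mul, mul_assoc]
          rw [sum_comm]
          exact sum_congr rfl fun i _ => sum_comm
      _ = (∑ i, x i) * ∑ j, x j := by simp only [hstoch, one_mul, sum_mul_sum]
      _ = 1 := by rw [hx1, one_mul]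

lemma QSO_iterate_mem_stdSimplex {m : ℕ} {p : Fin m → Fin m → Fin m → ℝ} (hp : IsQSOCoeff p)
    {x : Fin m → ℝ} (hx : x ∈ stdSimplex ℝ (Fin m)) (n : ℕ) :
    (QSO p)^[n] x ∈ stdSimplex ℝ (Fin m) := by
  induction n with
  | zero => exact hx
  | succ n ih =>
    rw [Function.iterate_succ_apply']
    exact QSO_mem_stdSimplex hp ih

lemma Majorizes.exists_le_apply {m : ℕ} {x y : Fin m → ℝ} (h : Majorizes y x) {c : ℝ} {i : Fin m}
    (hi : c ≤ x i) : ∃ j, c ≤ y j := by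
  obtain ⟨B, hB, hle⟩ := h {i}
  obtain ⟨j, rfl⟩ := card_eq_one.mp (hB.trans (card_singleton i))
  exact ⟨j, by simpa using hi.trans (by simpa using hle)⟩

lemma IsDissipative.exists_le_iterate_apply {m : ℕ} {p : Fin m → Fin m → Fin m → ℝ}
    (hp : IsQSOCoeff p) (hd : IsDissipative p) {x : Fin m → ℝ} (hx : x ∈ stdSimplex ℝ (Fin m))
    {c : ℝ} {i : Fin m} (hi : c ≤ x i) (n : ℕ) : ∃ j, c ≤ (QSO p)^[n] x j := by
  induction n with
  | zero => exact ⟨i, hi⟩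
  | succ n ih =>
    obtain ⟨j, hj⟩ := ih
    rw [Function.iterate_succ_apply']
    exact (hd _ (QSO_iterate_mem_stdSimplex hp hx n)).exists_le_apply hj

lemma isClosed_exists_le_apply {ι : Type*} [Finite ι] (c : ℝ) :
    IsClosed {y : ι → ℝ | ∃ j, c ≤ y j} := by
  simp only [Set.ofPred_exists]
  exact isClosed_iUnion_of_finite fun j => isClosed_le continuous_const (continuous_apply j)

lemma eq_vertex_of_one_le {m : ℕ} {x : Fin m → ℝ} (hx : x ∈ stdSimplex ℝ (Fin m)) {j : Fin m}
    (hj : 1 ≤ x j) : x = vertex j := by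
  obtain ⟨hx0, hx1⟩ := hx
  have hsplit := add_sum_erase univ x (mem_univ j)
  have hrest : ∑ i ∈ univ.erase j, x i = 0 :=
    le_antisymm (by linarith) (sum_nonneg fun i _ => hx0 i)
  funext i
  by_cases hij : i = j
  · subst hij
    simp only [vertex, ↓reduceIte]
    linarith
  · simp only [vertex, if_neg hij]
    exact (sum_eq_zero_iff_of_nonneg fun i _ => hx0 i).mp hrest i
      (mem_erase.mpr ⟨hij, mem_univ i⟩)

/-- a regular dissipative q.s.o. on the 2-dimensional simplex has its
unique fixed point among `e₁, e₂, e₃` and the three edge midpoints. -/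
theorem stmt10 (p : Fin 3 → Fin 3 → Fin 3 → ℝ)
    (hp : IsQSOCoeff p) (hd : IsDissipative p) (xs : Fin 3 → ℝ)
    (hxs : xs ∈ stdSimplex ℝ (Fin 3))
    (hreg : ∀ x ∈ stdSimplex ℝ (Fin 3),
      Tendsto (fun n => (QSO p)^[n] x) atTop (𝓝 xs)) :
    xs = ![(1 : ℝ), 0, 0] ∨ xs = ![(0 : ℝ), 1, 0] ∨ xs = ![(0 : ℝ), 0, 1] ∨
    xs = ![(1 : ℝ) / 2, 1 / 2, 0] ∨ xs = ![(1 : ℝ) / 2, 0, 1 / 2] ∨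
    xs = ![(0 : ℝ), 1 / 2, 1 / 2] := by
  have hv := vertex_mem_stdSimplex (0 : Fin 3)
  obtain ⟨j, hj⟩ : ∃ j, 1 ≤ xs j :=
    (isClosed_exists_le_apply 1).mem_of_tendsto (hreg _ hv) <| Eventually.of_forall
      (hd.exists_le_iterate_apply hp hv (i := 0) (by simp [vertex]))
  rw [eq_vertex_of_one_le hxs hj]
  fin_cases j <;> simp [vertex, ← List.ofFn_inj, List.ofFn_succ]
end
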